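/- arXiv:2310.17828 — 4 statements merged into one kernel-verified Lean document; each statement's English description precedes it below -/
import Mathlib

section
/- For all real numbers c > 0 and m with 1 < m < 2, the function x ↦ (1 − e^{−cx})/x^m is Lebesgue integrable on (0,∞) and ∫_0^∞ (1 − e^{−cx})/x^m dx = c^{m−1} Γ(2−m)/(m−1), where Γ is the Gamma function. -/
/-!
Integrate by parts against `x ^ (1 - m) / (1 - m)`. Since `1 - exp (-(c * x))` is at most `c * x`
near `0` and at most `1` near `∞`, the boundary terms vanish exactly because `1 < m < 2`, and
what remains is `c / (m - 1) * ∫ x ^ (1 - m) * exp (-(c * x))`, a Gamma integral equal to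
`c / (m - 1) * c ^ (m - 2) * Γ (2 - m)`.
-/

open MeasureTheory Set Filter Topology Real

lemma integrableOn_rpow_mul_exp_neg_mul {s b : ℝ} (hs : -1 < s) (hb : 0 < b) :
    IntegrableOn (fun x => x ^ s * exp (-(b * x))) (Ioi 0) := by
  simpa using integrableOn_rpow_mul_exp_neg_mul_rpow hs one_pos hb

section OneSubExpNeg

variable {c m p x : ℝ}

lemma one_sub_exp_neg_nonneg {y : ℝ} (hy : 0 ≤ y) : 0 ≤ 1 - exp (-y) := by
  linarith [exp_le_one_iff.mpr (neg_nonpos.mpr hy)]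

lemma one_sub_exp_neg_le (y : ℝ) : 1 - exp (-y) ≤ y := by
  linarith [add_one_le_exp (-y)]

lemma norm_one_sub_exp_neg_mul_mul_rpow_le_mul_rpow_add_one (hc : 0 ≤ c) (hx : 0 < x) :
    ‖(1 - exp (-(c * x))) * x ^ p‖ ≤ c * x ^ (p + 1) := by
  have hxp : 0 < x ^ p := rpow_pos_of_pos hx p
  rw [norm_mul, norm_of_nonneg (one_sub_exp_neg_nonneg (by positivity)), norm_of_nonneg hxp.le,
    rpow_add hx, rpow_one, mul_comm (x ^ p), ← mul_assoc]
  exact mul_le_mul_of_nonneg_right (one_sub_exp_neg_le _) hxp.le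

lemma norm_one_sub_exp_neg_mul_mul_rpow_le_rpow (hc : 0 ≤ c) (hx : 0 ≤ x) :
    ‖(1 - exp (-(c * x))) * x ^ p‖ ≤ x ^ p := by
  have hxp : 0 ≤ x ^ p := rpow_nonneg hx p
  rw [norm_mul, norm_of_nonneg (one_sub_exp_neg_nonneg (by positivity)), norm_of_nonneg hxp]
  exact mul_le_of_le_one_left hxp (by linarith [exp_pos (-(c * x))])

lemma tendsto_one_sub_exp_neg_mul_mul_rpow_nhdsGT_zero (hc : 0 ≤ c) (hp : -1 < p) :
    Tendsto (fun x => (1 - exp (-(c * x))) * x ^ p) (𝓝[>] 0) (𝓝 0) := by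
  have hbound : Tendsto (fun x : ℝ => c * x ^ (p + 1)) (𝓝[>] 0) (𝓝 0) := by
    have := ((continuousAt_rpow_const 0 (p + 1) (Or.inr (by linarith))).tendsto).const_mul c
    rw [zero_rpow (by linarith), mul_zero] at this
    exact this.mono_left nhdsWithin_le_nhds
  refine squeeze_zero_norm' ?_ hbound
  filter_upwards [self_mem_nhdsWithin] with x hx
  exact norm_one_sub_exp_neg_mul_mul_rpow_le_mul_rpow_add_one hc hx

lemma tendsto_one_sub_exp_neg_mul_mul_rpow_atTop (hc : 0 ≤ c) (hp : p < 0) :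
    Tendsto (fun x => (1 - exp (-(c * x))) * x ^ p) atTop (𝓝 0) := by
  have hbound : Tendsto (fun x : ℝ => x ^ p) atTop (𝓝 0) := by
    simpa using tendsto_rpow_neg_atTop (neg_pos.mpr hp)
  refine squeeze_zero_norm' ?_ hbound
  filter_upwards [eventually_ge_atTop 0] with x hx
  exact norm_one_sub_exp_neg_mul_mul_rpow_le_rpow hc hx

lemma integrableOn_one_sub_exp_neg_mul_mul_rpow_neg (hc : 0 ≤ c) (hm1 : 1 < m) (hm2 : m < 2) :
    IntegrableOn (fun x => (1 - exp (-(c * x))) * x ^ (-m)) (Ioi 0) := by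
  have hcont : ContinuousOn (fun x => (1 - exp (-(c * x))) * x ^ (-m)) (Ioi 0) :=
    (by fun_prop : Continuous fun x => 1 - exp (-(c * x))).continuousOn.mul
      (continuousOn_id.rpow_const fun x hx => Or.inl (ne_of_gt hx))
  have hmeas := hcont.aestronglyMeasurable (μ := volume) measurableSet_Ioi
  rw [← Ioc_union_Ioi_eq_Ioi zero_le_one] at hmeas ⊢
  refine IntegrableOn.union ?_ ?_
  · refine Integrable.mono' (((intervalIntegral.intervalIntegrable_rpow' (r := -m + 1)
      (by linarith)).1).const_mul c) (hmeas.mono_set subset_union_left) ?_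
    exact ae_restrict_of_forall_mem measurableSet_Ioc fun x hx =>
      norm_one_sub_exp_neg_mul_mul_rpow_le_mul_rpow_add_one hc hx.1
  · refine Integrable.mono' (integrableOn_Ioi_rpow_of_lt (a := -m) (by linarith) one_pos)
      (hmeas.mono_set subset_union_right) ?_
    exact ae_restrict_of_forall_mem measurableSet_Ioi fun x hx =>
      norm_one_sub_exp_neg_mul_mul_rpow_le_rpow hc (zero_le_one.trans hx.le)

lemma integral_one_sub_exp_neg_mul_mul_rpow_neg (hc : 0 < c) (hm1 : 1 < m) (hm2 : m < 2) :
    ∫ x in Ioi 0, (1 - exp (-(c * x))) * x ^ (-m) =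
      c / (m - 1) * ∫ x in Ioi 0, x ^ (1 - m) * exp (-(c * x)) := by
  have hm : 1 - m ≠ 0 := by linarith
  have hu : ∀ x ∈ Ioi (0 : ℝ),
      HasDerivAt (fun x => 1 - exp (-(c * x))) (c * exp (-(c * x))) x := fun x _ => by
    have h := ((hasDerivAt_id' x).const_mul (-c)).exp.const_sub 1
    rw [mul_one, mul_comm, neg_mul, neg_neg] at h
    simpa only [neg_mul] using h
  have hv : ∀ x ∈ Ioi (0 : ℝ), HasDerivAt (fun x => x ^ (1 - m) / (1 - m)) (x ^ (-m)) x :=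
    fun x hx => by
      have := (hasDerivAt_rpow_const (p := 1 - m) (Or.inl (ne_of_gt hx))).div_const (1 - m)
      rwa [show 1 - m - 1 = -m by ring, mul_div_cancel_left₀ _ hm] at this
  have hboundary : ∀ l, Tendsto (fun x => (1 - exp (-(c * x))) * x ^ (1 - m)) l (𝓝 0) →
      Tendsto (fun x => (1 - exp (-(c * x))) * (x ^ (1 - m) / (1 - m))) l (𝓝 0) := fun l h => by
    simpa only [mul_div_assoc, zero_div] using h.div_const (1 - m)
  have hderiv_mul : (fun x => c * exp (-(c * x)) * (x ^ (1 - m) / (1 - m))) =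
      fun x => c / (1 - m) * (x ^ (1 - m) * exp (-(c * x))) := by
    ext x; ring
  have hu'v : IntegrableOn (fun x => c * exp (-(c * x)) * (x ^ (1 - m) / (1 - m))) (Ioi 0) := by
    rw [hderiv_mul]
    exact (integrableOn_rpow_mul_exp_neg_mul (by linarith) hc).const_mul _
  have hparts := integral_Ioi_mul_deriv_eq_deriv_mul hu hv
    (integrableOn_one_sub_exp_neg_mul_mul_rpow_neg hc.le hm1 hm2) hu'v
    (hboundary _ (tendsto_one_sub_exp_neg_mul_mul_rpow_nhdsGT_zero hc.le (by linarith)))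
    (hboundary _ (tendsto_one_sub_exp_neg_mul_mul_rpow_atTop hc.le (by linarith)))
  rw [hparts, hderiv_mul, integral_const_mul, ← neg_sub m, div_neg]
  ring

end OneSubExpNeg

/-- for `c > 0` and `1 < m < 2`, the function `x ↦ (1 − e^{−cx})/x^m` is
Lebesgue integrable on `(0,∞)` and `∫_0^∞ (1 − e^{−cx})/x^m dx = c^{m−1} Γ(2−m)/(m−1)`. -/
theorem stmt5 (c m : ℝ) (hc : 0 < c) (hm1 : 1 < m) (hm2 : m < 2) :
    IntegrableOn (fun x : ℝ => (1 - Real.exp (-(c * x))) / x ^ m) (Set.Ioi 0) ∧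
      ∫ x in Set.Ioi (0 : ℝ), (1 - Real.exp (-(c * x))) / x ^ m =
        c ^ (m - 1) * Real.Gamma (2 - m) / (m - 1) := by
  have hdiv : EqOn (fun x => (1 - exp (-(c * x))) * x ^ (-m))
      (fun x => (1 - exp (-(c * x))) / x ^ m) (Ioi 0) := fun x hx => by
    simp only [rpow_neg (le_of_lt hx), div_eq_mul_inv]
  refine ⟨(integrableOn_one_sub_exp_neg_mul_mul_rpow_neg hc.le hm1 hm2).congr_fun hdiv
    measurableSet_Ioi, ?_⟩
  have hpow : c * (1 / c) ^ (2 - m) = c ^ (m - 1) := by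
    rw [show m - 1 = 1 - (2 - m) by ring, rpow_sub hc, rpow_one, div_rpow zero_le_one hc.le,
      one_rpow, mul_one_div]
  rw [← setIntegral_congr_fun measurableSet_Ioi hdiv,
    integral_one_sub_exp_neg_mul_mul_rpow_neg hc hm1 hm2, show 1 - m = 2 - m - 1 by ring,
    integral_rpow_mul_exp_neg_mul_Ioi (by linarith) hc, ← hpow]
  ring
end

section
/- For every α' ∈ (0,1) and every real τ ≥ 0, the function x ↦ (1 − e^{−x})² e^{−τ x} / x^{1+α'} is Lebesgue integrable on (0,∞) and ∫_0^∞ (1 − e^{−x})² e^{−τ x} / x^{1+α'} dx = (Γ(1−α')/α')·(2(1+τ)^{α'} − τ^{α'} − (2+τ)^{α'}), where Γ is the Gamma function and 0^{α'} := 0. -/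
/-!
Since `(1 - e^{-x})² e^{-τx} = (e^{-τx} - e^{-(τ+1)x}) - (e^{-(τ+1)x} - e^{-(τ+2)x})`, it suffices
to show `∫₀^∞ (e^{-ax} - e^{-bx}) / x^{1+α} dx = Γ(1-α)/α · (b^α - a^α)` for `0 ≤ a ≤ b`.
Integrating by parts against `x^{-α}`, the boundary term `x^{-α} (e^{-ax} - e^{-bx})` vanishes at
both ends (it is `O(x^{1-α})` at `0` and `O(x^{-α})` at `∞`), and what remains are the Gamma
integrals `∫₀^∞ c x^{-α} e^{-cx} dx = c^α Γ(1-α)`.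
-/

open MeasureTheory Set Real Filter Topology

section ExpDifference

variable {a b x : ℝ}

lemma exp_neg_mul_sub_exp_neg_mul_nonneg (hab : a ≤ b) (hx : 0 ≤ x) :
    0 ≤ exp (-(a * x)) - exp (-(b * x)) :=
  sub_nonneg.2 (exp_le_exp.2 (by nlinarith))

lemma exp_neg_mul_sub_exp_neg_mul_le_mul (ha : 0 ≤ a) (hab : a ≤ b) (hx : 0 ≤ x) :
    exp (-(a * x)) - exp (-(b * x)) ≤ (b - a) * x := by
  have hsplit : exp (-(b * x)) = exp (-(a * x)) * exp (-((b - a) * x)) := by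
    rw [← exp_add]; ring_nf
  have hlin := add_one_le_exp (-((b - a) * x))
  have hle_one : exp (-(a * x)) ≤ 1 := exp_le_one_iff.2 (by nlinarith)
  rw [hsplit]
  nlinarith [exp_pos (-(a * x)),
    mul_nonneg (sub_nonneg.2 hle_one) (mul_nonneg (sub_nonneg.2 hab) hx)]

lemma exp_neg_mul_sub_exp_neg_mul_le_one (ha : 0 ≤ a) (hx : 0 ≤ x) :
    exp (-(a * x)) - exp (-(b * x)) ≤ 1 := by
  have : exp (-(a * x)) ≤ 1 := exp_le_one_iff.2 (by nlinarith)
  linarith [exp_pos (-(b * x))]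

end ExpDifference

section GammaIntegral

variable {α c : ℝ}

lemma integrableOn_mul_rpow_neg_mul_exp_neg_mul (hα : α < 1) (hc : 0 ≤ c) :
    IntegrableOn (fun x : ℝ => c * (x ^ (-α) * exp (-(c * x)))) (Ioi 0) := by
  rcases hc.eq_or_lt with rfl | hc
  · simp
  refine Integrable.const_mul ?_ c
  refine (integrableOn_rpow_mul_exp_neg_mul_rpow (s := -α) (p := 1) (by linarith) one_pos
    hc).congr_fun (fun x _ => ?_) measurableSet_Ioi
  simp

lemma integral_mul_rpow_neg_mul_exp_neg_mul (hα0 : α ≠ 0) (hα : α < 1) (hc : 0 ≤ c) :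
    ∫ x in Ioi 0, c * (x ^ (-α) * exp (-(c * x))) = c ^ α * Gamma (1 - α) := by
  rcases hc.eq_or_lt with rfl | hc
  · simp [zero_rpow hα0]
  have hGamma := integral_rpow_mul_exp_neg_mul_Ioi (a := 1 - α) (sub_pos.2 hα) hc
  rw [sub_sub_cancel_left] at hGamma
  rw [integral_const_mul, hGamma, ← mul_assoc, one_div, inv_rpow hc.le, ← rpow_neg hc.le,
    neg_sub, rpow_sub_one hc.ne']
  field_simp

end GammaIntegral

section PowerWeightedExpDifference

variable {α a b : ℝ}

lemma integrableOn_exp_neg_mul_sub_exp_neg_mul_div_rpow (hα0 : 0 < α) (hα1 : α < 1)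
    (ha : 0 ≤ a) (hab : a ≤ b) :
    IntegrableOn (fun x : ℝ => (exp (-(a * x)) - exp (-(b * x))) / x ^ (1 + α)) (Ioi 0) := by
  have hmeas : ∀ s : Set ℝ, AEStronglyMeasurable
      (fun x : ℝ => (exp (-(a * x)) - exp (-(b * x))) / x ^ (1 + α)) (volume.restrict s) :=
    fun s => (by fun_prop : Measurable _).aestronglyMeasurable
  rw [← Ioc_union_Ioi_eq_Ioi zero_le_one]
  refine IntegrableOn.union ?_ ?_
  · have hpow : IntegrableOn (fun x : ℝ => x ^ (-α)) (Ioc 0 1) := by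
      rw [← intervalIntegrable_iff_integrableOn_Ioc_of_le zero_le_one]
      exact intervalIntegral.intervalIntegrable_rpow' (by linarith)
    refine (hpow.const_mul (b - a)).mono' (hmeas _) ?_
    filter_upwards [ae_restrict_mem measurableSet_Ioc] with x hx
    replace hx : 0 < x := hx.1
    rw [norm_of_nonneg (div_nonneg (exp_neg_mul_sub_exp_neg_mul_nonneg hab hx.le) (by positivity)),
      rpow_add hx, rpow_one, rpow_neg hx.le]
    calc (exp (-(a * x)) - exp (-(b * x))) / (x * x ^ α)
        ≤ (b - a) * x / (x * x ^ α) := by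
          gcongr; exact exp_neg_mul_sub_exp_neg_mul_le_mul ha hab hx.le
      _ = (b - a) * (x ^ α)⁻¹ := by field_simp
  · refine (integrableOn_Ioi_rpow_of_lt (by linarith : -(1 + α) < -1) one_pos).mono'
      (hmeas _) ?_
    filter_upwards [ae_restrict_mem measurableSet_Ioi] with x (hx : 1 < x)
    have hx0 : 0 < x := one_pos.trans hx
    rw [norm_of_nonneg (div_nonneg (exp_neg_mul_sub_exp_neg_mul_nonneg hab hx0.le)
      (by positivity)), rpow_neg hx0.le, ← one_div]
    gcongr
    exact exp_neg_mul_sub_exp_neg_mul_le_one ha hx0.le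

lemma hasDerivAt_rpow_neg_mul_exp_neg_mul_sub {x : ℝ} (hx : 0 < x) :
    HasDerivAt (fun y : ℝ => y ^ (-α) * (exp (-(a * y)) - exp (-(b * y))))
      (b * (x ^ (-α) * exp (-(b * x))) - a * (x ^ (-α) * exp (-(a * x)))
        - α * ((exp (-(a * x)) - exp (-(b * x))) / x ^ (1 + α))) x := by
  have hexp : ∀ c : ℝ, HasDerivAt (fun y : ℝ => exp (-(c * y))) (exp (-(c * x)) * -c) x :=
    fun c => by simpa using ((hasDerivAt_id x).const_mul c).neg.exp
  refine ((hasDerivAt_rpow_const (p := -α) (Or.inl hx.ne')).mul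
    ((hexp a).sub (hexp b))).congr_deriv ?_
  rw [show -α - 1 = -(1 + α) by ring, rpow_neg hx.le, Pi.sub_apply]
  ring

lemma tendsto_rpow_neg_mul_exp_neg_mul_sub_nhdsGT_zero (hα1 : α < 1) (ha : 0 ≤ a)
    (hab : a ≤ b) :
    Tendsto (fun y : ℝ => y ^ (-α) * (exp (-(a * y)) - exp (-(b * y)))) (𝓝[>] 0) (𝓝 0) := by
  have hlim : Tendsto (fun y : ℝ => (b - a) * y ^ (1 - α)) (𝓝[>] 0) (𝓝 0) := by
    have := ((continuous_rpow_const (sub_nonneg.2 hα1.le)).tendsto 0).const_mul (b - a)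
    rw [zero_rpow (sub_ne_zero.2 hα1.ne'), mul_zero] at this
    exact this.mono_left nhdsWithin_le_nhds
  refine squeeze_zero' ?_ ?_ hlim
  · filter_upwards [self_mem_nhdsWithin] with y (hy : 0 < y)
    exact mul_nonneg (by positivity) (exp_neg_mul_sub_exp_neg_mul_nonneg hab hy.le)
  · filter_upwards [self_mem_nhdsWithin] with y (hy : 0 < y)
    calc y ^ (-α) * (exp (-(a * y)) - exp (-(b * y)))
        ≤ y ^ (-α) * ((b - a) * y) := by
          gcongr; exact exp_neg_mul_sub_exp_neg_mul_le_mul ha hab hy.le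
      _ = (b - a) * y ^ (1 - α) := by
          rw [show 1 - α = -α + 1 by ring, rpow_add hy, rpow_one]; ring

lemma tendsto_rpow_neg_mul_exp_neg_mul_sub_atTop (hα0 : 0 < α) (ha : 0 ≤ a) (hab : a ≤ b) :
    Tendsto (fun y : ℝ => y ^ (-α) * (exp (-(a * y)) - exp (-(b * y)))) atTop (𝓝 0) := by
  refine squeeze_zero' ?_ ?_ (tendsto_rpow_neg_atTop hα0)
  · filter_upwards [eventually_ge_atTop 0] with y hy
    exact mul_nonneg (by positivity) (exp_neg_mul_sub_exp_neg_mul_nonneg hab hy)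
  · filter_upwards [eventually_ge_atTop 0] with y hy
    exact mul_le_of_le_one_right (by positivity) (exp_neg_mul_sub_exp_neg_mul_le_one ha hy)

lemma integral_exp_neg_mul_sub_exp_neg_mul_div_rpow (hα0 : 0 < α) (hα1 : α < 1)
    (ha : 0 ≤ a) (hab : a ≤ b) :
    ∫ x in Ioi 0, (exp (-(a * x)) - exp (-(b * x))) / x ^ (1 + α)
      = Gamma (1 - α) / α * (b ^ α - a ^ α) := by
  have hb : 0 ≤ b := ha.trans hab
  have hf := integrableOn_exp_neg_mul_sub_exp_neg_mul_div_rpow hα0 hα1 ha hab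
  have hφa := integrableOn_mul_rpow_neg_mul_exp_neg_mul hα1 ha
  have hφb := integrableOn_mul_rpow_neg_mul_exp_neg_mul hα1 hb
  have hφ : IntegrableOn (fun x : ℝ => b * (x ^ (-α) * exp (-(b * x)))
      - a * (x ^ (-α) * exp (-(a * x)))) (Ioi 0) := hφb.sub hφa
  have hparts := integral_Ioi_of_hasDerivAt_of_tendsto
    (continuousWithinAt_Ioi_iff_Ici.1 (by
      simpa [ContinuousWithinAt] using
        tendsto_rpow_neg_mul_exp_neg_mul_sub_nhdsGT_zero hα1 ha hab))
    (fun x hx => hasDerivAt_rpow_neg_mul_exp_neg_mul_sub hx)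
    (hφ.sub (hf.const_mul α))
    (tendsto_rpow_neg_mul_exp_neg_mul_sub_atTop hα0 ha hab)
  rw [integral_sub hφ (hf.const_mul α), integral_sub hφb hφa,
    integral_mul_rpow_neg_mul_exp_neg_mul hα0.ne' hα1 ha,
    integral_mul_rpow_neg_mul_exp_neg_mul hα0.ne' hα1 hb, integral_const_mul] at hparts
  simp only [sub_self, mul_zero] at hparts
  rw [div_mul_eq_mul_div, eq_div_iff hα0.ne']
  linarith

end PowerWeightedExpDifference

/-- for `α' ∈ (0,1)` and `τ ≥ 0`, the function
`x ↦ (1 − e^{−x})² e^{−τx}/x^{1+α'}` is Lebesgue integrable on `(0,∞)` and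
`∫_0^∞ (1 − e^{−x})² e^{−τx}/x^{1+α'} dx = (Γ(1−α')/α')(2(1+τ)^{α'} − τ^{α'} − (2+τ)^{α'})`
(with `0^{α'} = 0`, which is the convention of `Real.rpow`). -/
theorem stmt8 (α' τ : ℝ) (h0 : 0 < α') (h1 : α' < 1) (hτ : 0 ≤ τ) :
    IntegrableOn
        (fun x : ℝ => (1 - Real.exp (-x)) ^ 2 * Real.exp (-(τ * x)) / x ^ (1 + α'))
        (Set.Ioi 0) ∧
      ∫ x in Set.Ioi (0 : ℝ), (1 - Real.exp (-x)) ^ 2 * Real.exp (-(τ * x)) / x ^ (1 + α') =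
        Real.Gamma (1 - α') / α' * (2 * (1 + τ) ^ α' - τ ^ α' - (2 + τ) ^ α') := by
  have hτ1 : 0 ≤ 1 + τ := by linarith
  have hle1 : τ ≤ 1 + τ := by linarith
  have hle2 : 1 + τ ≤ 2 + τ := by linarith
  have hsecond_difference :
      (fun x : ℝ => (1 - exp (-x)) ^ 2 * exp (-(τ * x)) / x ^ (1 + α')) =
        fun x => (exp (-(τ * x)) - exp (-((1 + τ) * x))) / x ^ (1 + α')
          - (exp (-((1 + τ) * x)) - exp (-((2 + τ) * x))) / x ^ (1 + α') := by
    funext x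
    rw [← sub_div, show -((1 + τ) * x) = -x + -(τ * x) by ring,
      show -((2 + τ) * x) = -x + -x + -(τ * x) by ring, exp_add, exp_add, exp_add]
    ring
  have hI₁ := integrableOn_exp_neg_mul_sub_exp_neg_mul_div_rpow h0 h1 hτ hle1
  have hI₂ := integrableOn_exp_neg_mul_sub_exp_neg_mul_div_rpow h0 h1 hτ1 hle2
  rw [hsecond_difference]
  refine ⟨hI₁.sub hI₂, ?_⟩
  rw [integral_sub hI₁ hI₂, integral_exp_neg_mul_sub_exp_neg_mul_div_rpow h0 h1 hτ hle1,
    integral_exp_neg_mul_sub_exp_neg_mul_div_rpow h0 h1 hτ1 hle2]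
  ring
end

section
/- Let α' ∈ (0,1) and α := d/2 − 1 + α'. The function f_α is twice continuously differentiable on (0,∞) and satisfies: ∫_0^∞ x^{d−1}|f_α(x²)| dx < ∞, ∫_1^∞ x^{d}|f_α'(x²)| dx < ∞, ∫_1^∞ x^{d+1}|f_α''(x²)| dx < ∞, and the limits superior as x → 0⁺ of x^{2α}|f_α(x²)|, of x^{2(1+α)}|f_α'(x²)|, and of x^{2(2+α)}|f_α''(x²)| are all finite. -/
/-! For `t > 0`, `t ^ (k + 1 + α)` times the `k`-th derivative of `f_α` is a combination of
`1 - e^{-t}`, `t e^{-t}` and `t² e^{-t}`, each bounded by a constant times `min 1 t`. Hence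
`|f_α^{(k)} t| ≤ C_k min (t^{-(k+α)}) (t^{-(k+1+α)})`: the first bound gives the `limsup`s at `0⁺`
and integrability near `0`, the second integrability at `∞`, since `α = d/2 - 1 + α'` with
`0 < α' < 1` puts the resulting powers of `x` on the integrable side of `-1`. -/

open MeasureTheory Real Set Filter Topology

section PowerBounds

variable {h : ℝ → ℝ} {C q : ℝ}

lemma rpow_mul_abs_comp_sq_le (hC : ∀ t > 0, |h t| ≤ C * t ^ (-q)) (r : ℝ) {x : ℝ}
    (hx : 0 < x) :
    x ^ r * |h (x ^ 2)| ≤ C * x ^ (r - 2 * q) := by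
  have hsq : (x ^ 2) ^ (-q) = x ^ (-(2 * q)) := by
    rw [← rpow_natCast_mul hx.le]; push_cast; ring_nf
  calc x ^ r * |h (x ^ 2)| ≤ x ^ r * (C * x ^ (-(2 * q))) :=
        hsq ▸ mul_le_mul_of_nonneg_left (hC _ (by positivity)) (by positivity)
    _ = C * x ^ (r - 2 * q) := by rw [sub_eq_add_neg, rpow_add hx]; ring

lemma isBoundedUnder_rpow_mul_abs_comp_sq (hC : ∀ t > 0, |h t| ≤ C * t ^ (-q)) :
    IsBoundedUnder (· ≤ ·) (𝓝[>] 0) (fun x : ℝ => x ^ (2 * q) * |h (x ^ 2)|) := by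
  refine ⟨C, eventually_map.mpr ?_⟩
  filter_upwards [self_mem_nhdsWithin] with x (hx : 0 < x)
  simpa using rpow_mul_abs_comp_sq_le hC (2 * q) hx

variable (hh : Measurable h) (hC : ∀ t > 0, |h t| ≤ C * t ^ (-q)) {n : ℕ}
include hh hC

lemma integrableOn_Ioc_pow_mul_abs_comp_sq (hq : 2 * q < n + 1) :
    IntegrableOn (fun x : ℝ => x ^ n * |h (x ^ 2)|) (Ioc 0 1) := by
  refine Integrable.mono' (g := fun x : ℝ => C * x ^ (n - 2 * q))
    (((intervalIntegrable_iff_integrableOn_Ioc_of_le zero_le_one).mp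
      (intervalIntegral.intervalIntegrable_rpow' (by linarith))).const_mul C)
    (by fun_prop) ?_
  filter_upwards [ae_restrict_mem measurableSet_Ioc] with x hx
  rw [norm_of_nonneg (mul_nonneg (pow_nonneg hx.1.le _) (abs_nonneg _)), ← rpow_natCast]
  exact rpow_mul_abs_comp_sq_le hC n hx.1

lemma integrableOn_Ioi_pow_mul_abs_comp_sq (hq : n + 1 < 2 * q) :
    IntegrableOn (fun x : ℝ => x ^ n * |h (x ^ 2)|) (Ioi 1) := by
  refine Integrable.mono' (g := fun x : ℝ => C * x ^ (n - 2 * q))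
    ((integrableOn_Ioi_rpow_of_lt (by linarith) one_pos).const_mul C)
    (by fun_prop) ?_
  filter_upwards [ae_restrict_mem measurableSet_Ioi] with x (hx : 1 < x)
  rw [norm_of_nonneg (by positivity), ← rpow_natCast]
  exact rpow_mul_abs_comp_sq_le hC n (one_pos.trans hx)

end PowerBounds

lemma mul_exp_neg_le_one (t : ℝ) : t * exp (-t) ≤ 1 :=
  (mul_exp_neg_le_exp_neg_one t).trans (exp_le_one_iff.mpr (by norm_num))

lemma sq_mul_exp_neg_le_two {t : ℝ} (ht : 0 ≤ t) : t ^ 2 * exp (-t) ≤ 2 := by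
  have h := pow_div_factorial_le_exp t ht 2
  rw [Nat.factorial_two, Nat.cast_ofNat, div_le_iff₀ two_pos] at h
  calc t ^ 2 * exp (-t) ≤ exp t * 2 * exp (-t) := by gcongr
    _ = 2 := by rw [mul_right_comm, ← exp_add, add_neg_cancel, exp_zero, one_mul]

lemma HasDerivAt.mul_rpow_neg {a : ℝ → ℝ} {a' t c c' : ℝ} (ha : HasDerivAt a a' t) (ht : 0 < t)
    (hc : c' = c + 1) :
    HasDerivAt (fun s => a s * s ^ (-c)) ((t * a' - c * a t) * t ^ (-c')) t := by
  refine (ha.mul (hasDerivAt_rpow_const (p := -c) (Or.inl ht.ne'))).congr_deriv ?_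
  rw [hc, show -c = -(c + 1) + 1 by ring, rpow_add_one ht.ne',
    show -(c + 1) + 1 - 1 = -(c + 1) by ring]
  ring

lemma abs_mul_rpow_neg_le {N C t p q : ℝ} (ht : 0 < t) (hN : |N| ≤ C) (hNt : |N| ≤ C * t)
    (hpq : p = q + 1) : |N * t ^ (-p)| ≤ C * t ^ (-q) ∧ |N * t ^ (-p)| ≤ C * t ^ (-p) := by
  have hp : 0 ≤ t ^ (-p) := rpow_nonneg ht.le _
  rw [abs_mul, abs_of_nonneg hp]
  refine ⟨?_, mul_le_mul_of_nonneg_right hN hp⟩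
  calc |N| * t ^ (-p) ≤ C * t * t ^ (-p) := mul_le_mul_of_nonneg_right hNt hp
    _ = C * t ^ (-q) := by
      rw [hpq, show -q = -(q + 1) + 1 by ring, rpow_add_one ht.ne']; ring

noncomputable def fα (α t : ℝ) : ℝ := (1 - exp (-t)) / t ^ (1 + α)

noncomputable def fα' (α t : ℝ) : ℝ :=
  (t * exp (-t) - (1 + α) * (1 - exp (-t))) * t ^ (-(2 + α))

noncomputable def fα'' (α t : ℝ) : ℝ :=
  ((1 + α) * (2 + α) * (1 - exp (-t)) - 2 * (1 + α) * t * exp (-t) - t ^ 2 * exp (-t)) *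
    t ^ (-(3 + α))

section fα

variable {α t : ℝ}

lemma fα_eq_mul_rpow_neg (ht : 0 ≤ t) : fα α t = (1 - exp (-t)) * t ^ (-(1 + α)) := by
  rw [fα, rpow_neg ht, div_eq_mul_inv]

lemma contDiffOn_fα {n : WithTop ℕ∞} : ContDiffOn ℝ n (fα α) (Ioi 0) := fun _ ht =>
  ((contDiff_const.sub (contDiff_exp.comp contDiff_neg)).contDiffAt.div
    (contDiffAt_rpow_const_of_ne (ne_of_gt ht)) (rpow_pos_of_pos ht _).ne').contDiffWithinAt

lemma hasDerivAt_fα (ht : 0 < t) : HasDerivAt (fα α) (fα' α t) t := by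
  have hN : HasDerivAt (fun s => 1 - exp (-s)) (exp (-t)) t := by
    simpa using ((hasDerivAt_neg t).exp).const_sub 1
  refine ((hN.mul_rpow_neg ht (c := 1 + α) (c' := 2 + α) (by ring)).congr_of_eventuallyEq
    ?_).congr_deriv rfl
  filter_upwards [Ioi_mem_nhds ht] with s hs
  exact fα_eq_mul_rpow_neg (le_of_lt hs)

lemma hasDerivAt_fα' (ht : 0 < t) : HasDerivAt (fα' α) (fα'' α t) t := by
  have hN : HasDerivAt (fun s => s * exp (-s) - (1 + α) * (1 - exp (-s)))
      (-(α + t) * exp (-t)) t := by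
    have he : HasDerivAt (fun s => exp (-s)) (-exp (-t)) t := by
      simpa using (hasDerivAt_neg t).exp
    exact (((hasDerivAt_id' t).mul he).sub ((he.const_sub 1).const_mul (1 + α))).congr_deriv
      (by ring)
  exact (hN.mul_rpow_neg ht (c := 2 + α) (c' := 3 + α) (by ring)).congr_deriv
    (by rw [fα'']; ring)

lemma deriv_fα (ht : 0 < t) : deriv (fα α) t = fα' α t := (hasDerivAt_fα ht).deriv

lemma deriv_deriv_fα (ht : 0 < t) : deriv (deriv (fα α)) t = fα'' α t := by
  have h : deriv (fα α) =ᶠ[𝓝 t] fα' α := by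
    filter_upwards [Ioi_mem_nhds ht] with s hs
    exact deriv_fα hs
  rw [h.deriv_eq, (hasDerivAt_fα' ht).deriv]

lemma abs_fα_le (ht : 0 < t) : |fα α t| ≤ 1 * t ^ (-α) ∧ |fα α t| ≤ 1 * t ^ (-(1 + α)) := by
  have hN : |1 - exp (-t)| ≤ 1 ∧ |1 - exp (-t)| ≤ 1 * t := by
    have := one_sub_le_exp_neg t
    have := exp_pos (-t)
    have : exp (-t) ≤ 1 := exp_le_one_iff.mpr (by linarith)
    constructor <;> rw [abs_le] <;> constructor <;> linarith
  rw [fα_eq_mul_rpow_neg ht.le]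
  exact abs_mul_rpow_neg_le ht hN.1 hN.2 (by ring)

variable (hα : 0 ≤ 1 + α)
include hα

lemma abs_fα'_le (ht : 0 < t) :
    |fα' α t| ≤ (2 + α) * t ^ (-(1 + α)) ∧ |fα' α t| ≤ (2 + α) * t ^ (-(2 + α)) := by
  have := one_sub_le_exp_neg t
  have := exp_pos (-t)
  have : exp (-t) ≤ 1 := exp_le_one_iff.mpr (by linarith)
  have := mul_exp_neg_le_one t
  refine abs_mul_rpow_neg_le ht ?_ ?_ (by ring) <;> rw [abs_le] <;> constructor <;> nlinarith

lemma abs_fα''_le (ht : 0 < t) :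
    |fα'' α t| ≤ (2 + α) * (3 + α) * t ^ (-(2 + α)) ∧
      |fα'' α t| ≤ (2 + α) * (3 + α) * t ^ (-(3 + α)) := by
  have := one_sub_le_exp_neg t
  have he := exp_pos (-t)
  have he1 : exp (-t) ≤ 1 := exp_le_one_iff.mpr (by linarith)
  have hte := mul_exp_neg_le_one t
  have := sq_mul_exp_neg_le_two ht.le
  have hαα : 0 ≤ (1 + α) * (2 + α) := by nlinarith
  have : t * (t * exp (-t)) ≤ t * 1 := mul_le_mul_of_nonneg_left hte ht.le
  refine abs_mul_rpow_neg_le ht ?_ ?_ (by ring) <;> rw [abs_le] <;> constructor <;>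
    nlinarith [mul_nonneg hαα he.le, mul_nonneg hα (by positivity : 0 ≤ t * exp (-t)),
      mul_le_mul_of_nonneg_left he1 hαα,
      mul_le_mul_of_nonneg_left (show 1 - exp (-t) ≤ t by linarith) hαα]

end fα

/-- membership of `f_α(x) = (1−e^{−x})/x^{1+α}`, `α = d/2 − 1 + α'`, in the
class `𝒬_β` with `β = (2α, 2(1+α), 2(2+α))`: `f_α` is `C²` on `(0,∞)`, the weighted
integrability conditions hold, and the stated `limsup`s at `0⁺` are finite
(expressed as eventual boundedness along `𝓝[>] 0`). -/
theorem stmt12 (d : ℕ) (hd : 2 ≤ d) (α' α : ℝ) (h0 : 0 < α') (h1 : α' < 1)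
    (hα : α = (d : ℝ) / 2 - 1 + α') (f : ℝ → ℝ)
    (hf : f = fun x : ℝ => (1 - Real.exp (-x)) / x ^ (1 + α)) :
    ContDiffOn ℝ 2 f (Set.Ioi 0) ∧
      IntegrableOn (fun x : ℝ => x ^ (d - 1) * |f (x ^ 2)|) (Set.Ioi 0) ∧
      IntegrableOn (fun x : ℝ => x ^ d * |deriv f (x ^ 2)|) (Set.Ioi 1) ∧
      IntegrableOn (fun x : ℝ => x ^ (d + 1) * |deriv (deriv f) (x ^ 2)|) (Set.Ioi 1) ∧
      Filter.IsBoundedUnder (· ≤ ·) (nhdsWithin 0 (Set.Ioi 0))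
        (fun x : ℝ => x ^ (2 * α) * |f (x ^ 2)|) ∧
      Filter.IsBoundedUnder (· ≤ ·) (nhdsWithin 0 (Set.Ioi 0))
        (fun x : ℝ => x ^ (2 * (1 + α)) * |deriv f (x ^ 2)|) ∧
      Filter.IsBoundedUnder (· ≤ ·) (nhdsWithin 0 (Set.Ioi 0))
        (fun x : ℝ => x ^ (2 * (2 + α)) * |deriv (deriv f) (x ^ 2)|) := by
  obtain rfl : f = fα α := hf
  have hd_sub_one : ((d - 1 : ℕ) : ℝ) = 2 * α + 1 - 2 * α' := by
    rw [Nat.cast_sub (by omega), hα]; push_cast; ring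
  have hα1 : 0 ≤ 1 + α := by rw [hα]; linarith [(Nat.cast_nonneg d : (0 : ℝ) ≤ d)]
  have hmeas : Measurable (fα α) := by unfold fα; fun_prop
  have hf_small (t : ℝ) (ht : 0 < t) := (abs_fα_le (α := α) ht).1
  have hf_large (t : ℝ) (ht : 0 < t) := (abs_fα_le (α := α) ht).2
  have hf'_small (t : ℝ) (ht : 0 < t) := deriv_fα (α := α) ht ▸ (abs_fα'_le hα1 ht).1
  have hf'_large (t : ℝ) (ht : 0 < t) := deriv_fα (α := α) ht ▸ (abs_fα'_le hα1 ht).2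
  have hf''_small (t : ℝ) (ht : 0 < t) := deriv_deriv_fα (α := α) ht ▸ (abs_fα''_le hα1 ht).1
  have hf''_large (t : ℝ) (ht : 0 < t) := deriv_deriv_fα (α := α) ht ▸ (abs_fα''_le hα1 ht).2
  refine ⟨contDiffOn_fα, ?_,
    integrableOn_Ioi_pow_mul_abs_comp_sq (measurable_deriv _) hf'_large ?_,
    integrableOn_Ioi_pow_mul_abs_comp_sq (measurable_deriv _) hf''_large ?_,
    isBoundedUnder_rpow_mul_abs_comp_sq hf_small, isBoundedUnder_rpow_mul_abs_comp_sq hf'_small,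
    isBoundedUnder_rpow_mul_abs_comp_sq hf''_small⟩
  · rw [← Ioc_union_Ioi_eq_Ioi zero_le_one]
    exact (integrableOn_Ioc_pow_mul_abs_comp_sq hmeas hf_small (by linarith)).union
      (integrableOn_Ioi_pow_mul_abs_comp_sq hmeas hf_large (by linarith))
  all_goals push_cast; rw [hα]; linarith
end

section
/- Let α' ∈ (0,1), α := d/2 − 1 + α', and τ ≥ 0. The function g_{α,τ} is twice continuously differentiable on (0,∞) and satisfies: ∫_0^∞ x^{d−1}|g_{α,τ}(x²)| dx < ∞, ∫_1^∞ x^{d}|g_{α,τ}'(x²)| dx < ∞, ∫_1^∞ x^{d+1}|g_{α,τ}''(x²)| dx < ∞, and the limits superior as x → 0⁺ of x^{2α}|g_{α,τ}(x²)|, of x^{2(1+α)}|g_{α,τ}'(x²)|, and of x^{2(1+α)}|g_{α,τ}''(x²)| are all finite. -/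
/-!
Write `g_{α,τ}(x) = φ(x) x^{-(1+α)}` with `φ(x) = (1 - e^{-x})² e^{-τx} / 2`. Since
`1 - e^{-x} ≤ x`, the functions `φ, φ', φ''` are bounded by constant multiples of `x², x, 1`; since
`x^n e^{-x} ≤ n!`, they are also bounded by multiples of `1, 1/x, 1/x²`. By the product rule,
multiplying by `x^s` shifts such a family of power bounds by `s`, so `g^{(k)}(y)` is bounded both
by `y^{1-α-k}` and by `y^{-1-α-k}`. After the substitution `y = x²` every integrability and `limsup`
condition becomes an inequality between exponents, which `α = d/2 - 1 + α'` with `0 < α' < 1`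
satisfies.
-/

open Real Set Filter Topology MeasureTheory

theorem pow_mul_exp_neg_le_factorial {x : ℝ} (hx : 0 ≤ x) (n : ℕ) :
    x ^ n * exp (-x) ≤ n.factorial := by
  have h := pow_div_factorial_le_exp x hx n
  rw [div_le_iff₀ (by positivity)] at h
  rw [exp_neg, ← div_eq_mul_inv, div_le_iff₀ (exp_pos x)]
  linarith

theorem rpow_mul_abs_comp_sq_le_s13 {f : ℝ → ℝ} {C p r x : ℝ} (hx : 0 < x)
    (hf : |f (x ^ 2)| ≤ C * (x ^ 2) ^ p) : x ^ r * |f (x ^ 2)| ≤ C * x ^ (r + 2 * p) :=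
  calc x ^ r * |f (x ^ 2)| ≤ x ^ r * (C * (x ^ 2) ^ p) := by gcongr
    _ = C * x ^ (r + 2 * p) := by
      rw [← rpow_natCast, ← rpow_mul hx.le, rpow_add hx]
      push_cast
      ring

section SquaredArgument

variable {f : ℝ → ℝ} {C p : ℝ}

theorem integrableOn_Ioi_one_pow_mul_abs_comp_sq {n : ℕ} (hf : Measurable f)
    (hbound : ∀ y > 1, |f y| ≤ C * y ^ p) (hp : n + 2 * p < -1) :
    IntegrableOn (fun x : ℝ => x ^ n * |f (x ^ 2)|) (Ioi 1) := by
  refine ((integrableOn_Ioi_rpow_of_lt hp one_pos).const_mul C).mono'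
    (by fun_prop : Measurable _).aestronglyMeasurable ?_
  filter_upwards [ae_restrict_mem measurableSet_Ioi] with x (hx : 1 < x)
  rw [norm_of_nonneg (by positivity), ← rpow_natCast]
  exact rpow_mul_abs_comp_sq_le_s13 (one_pos.trans hx) (hbound _ (one_lt_pow₀ hx two_ne_zero))

theorem integrableOn_Ioc_zero_one_pow_mul_abs_comp_sq {n : ℕ} (hf : Measurable f)
    (hbound : ∀ y ∈ Ioc 0 1, |f y| ≤ C * y ^ p) (hp : -1 < n + 2 * p) :
    IntegrableOn (fun x : ℝ => x ^ n * |f (x ^ 2)|) (Ioc 0 1) := by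
  refine ((intervalIntegral.intervalIntegrable_rpow' hp).1.const_mul C).mono'
    (by fun_prop : Measurable _).aestronglyMeasurable ?_
  filter_upwards [ae_restrict_mem measurableSet_Ioc] with x ⟨hx0, hx1⟩
  rw [norm_of_nonneg (by positivity), ← rpow_natCast]
  exact rpow_mul_abs_comp_sq_le_s13 hx0 (hbound _ ⟨by positivity, pow_le_one₀ hx0.le hx1⟩)

theorem isBoundedUnder_rpow_mul_abs_comp_sq_s13 {r : ℝ} (hbound : ∀ y ∈ Ioc 0 1, |f y| ≤ C * y ^ p)
    (hp : 0 ≤ r + 2 * p) :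
    IsBoundedUnder (· ≤ ·) (𝓝[>] 0) (fun x : ℝ => x ^ r * |f (x ^ 2)|) := by
  refine ⟨|C|, eventually_map.2 ?_⟩
  filter_upwards [Ioo_mem_nhdsGT one_pos] with x ⟨hx0, hx1⟩
  calc x ^ r * |f (x ^ 2)|
      ≤ C * x ^ (r + 2 * p) :=
        rpow_mul_abs_comp_sq_le_s13 hx0 (hbound _ ⟨by positivity, pow_le_one₀ hx0.le hx1.le⟩)
    _ ≤ |C| * 1 := mul_le_mul (le_abs_self C) (rpow_le_one hx0.le hx1.le hp) (by positivity)
        (abs_nonneg C)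
    _ = |C| := mul_one _

end SquaredArgument

def DerivPowBound (A m : ℝ) (f f' f'' : ℝ → ℝ) (y : ℝ) : Prop :=
  |f y| ≤ A * y ^ m ∧ |f' y| ≤ A * y ^ (m - 1) ∧ |f'' y| ≤ A * y ^ (m - 2)

noncomputable def mulRpowDeriv (f f' : ℝ → ℝ) (s y : ℝ) : ℝ :=
  f' y * y ^ s + s * (f y * y ^ (s - 1))

section MulRpow

variable {f f' f'' : ℝ → ℝ} {A B m s y : ℝ}

theorem hasDerivAt_mul_rpow (hf : HasDerivAt f (f' y) y) (hy : 0 < y) :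
    HasDerivAt (fun x => f x * x ^ s) (mulRpowDeriv f f' s y) y := by
  refine (hf.fun_mul (hasDerivAt_rpow_const (Or.inl hy.ne'))).congr_deriv ?_
  rw [mulRpowDeriv]
  ring

theorem hasDerivAt_mulRpowDeriv (hf : HasDerivAt f (f' y) y) (hf' : HasDerivAt f' (f'' y) y)
    (hy : 0 < y) :
    HasDerivAt (mulRpowDeriv f f' s)
      (mulRpowDeriv f' f'' s y + s * mulRpowDeriv f f' (s - 1) y) y :=
  (hasDerivAt_mul_rpow hf' hy).fun_add ((hasDerivAt_mul_rpow hf hy).const_mul s)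

theorem abs_mul_rpow_le (hy : 0 < y) (h : |f y| ≤ A * y ^ m) :
    |f y * y ^ s| ≤ A * y ^ (m + s) := by
  rw [abs_mul, abs_of_pos (rpow_pos_of_pos hy s), rpow_add hy, ← mul_assoc]
  gcongr

theorem abs_mulRpowDeriv_le (hy : 0 < y) (h : |f y| ≤ A * y ^ m)
    (h' : |f' y| ≤ B * y ^ (m - 1)) :
    |mulRpowDeriv f f' s y| ≤ (B + |s| * A) * y ^ (m + s - 1) := by
  have h₁ := abs_mul_rpow_le (s := s) hy h'
  have h₂ := abs_mul_rpow_le (s := s - 1) hy h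
  calc |mulRpowDeriv f f' s y|
      ≤ |f' y * y ^ s| + |s| * |f y * y ^ (s - 1)| := by
        rw [mulRpowDeriv, ← abs_mul]; exact abs_add_le _ _
    _ ≤ B * y ^ (m - 1 + s) + |s| * (A * y ^ (m + (s - 1))) := by gcongr
    _ = (B + |s| * A) * y ^ (m + s - 1) := by ring_nf

theorem DerivPowBound.mul_rpow (h : DerivPowBound A m f f' f'' y) (hy : 0 < y) (s : ℝ) :
    DerivPowBound (A * ((1 + |s|) * (2 + |s|))) (m + s) (fun x => f x * x ^ s)
      (mulRpowDeriv f f' s) (fun x => mulRpowDeriv f' f'' s x + s * mulRpowDeriv f f' (s - 1) x)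
      y := by
  obtain ⟨h₀, h₁, h₂⟩ := h
  have hA : 0 ≤ A := nonneg_of_mul_nonneg_left ((abs_nonneg _).trans h₀) (rpow_pos_of_pos hy m)
  have hs₁ : |s - 1| ≤ |s| + 1 := by simpa using abs_sub s 1
  refine ⟨?_, ?_, ?_⟩
  · calc |f y * y ^ s| ≤ A * y ^ (m + s) := abs_mul_rpow_le hy h₀
      _ ≤ A * ((1 + |s|) * (2 + |s|)) * y ^ (m + s) := by
        gcongr ?_ * _
        exact le_mul_of_one_le_right hA (by nlinarith [abs_nonneg s])
  · calc |mulRpowDeriv f f' s y| ≤ (A + |s| * A) * y ^ (m + s - 1) := abs_mulRpowDeriv_le hy h₀ h₁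
      _ ≤ A * ((1 + |s|) * (2 + |s|)) * y ^ (m + s - 1) := by
        gcongr ?_ * _
        nlinarith [mul_nonneg hA (abs_nonneg s), mul_nonneg hA (sq_nonneg |s|)]
  · have h₂' : |f'' y| ≤ A * y ^ (m - 1 - 1) := by rwa [sub_sub, one_add_one_eq_two]
    have hX := abs_mulRpowDeriv_le (s := s) hy h₁ h₂'
    have hY := abs_mulRpowDeriv_le (s := s - 1) hy h₀ h₁
    rw [show m - 1 + s - 1 = m + s - 2 by ring] at hX
    rw [show m + (s - 1) - 1 = m + s - 2 by ring] at hY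
    calc |mulRpowDeriv f' f'' s y + s * mulRpowDeriv f f' (s - 1) y|
        ≤ |mulRpowDeriv f' f'' s y| + |s| * |mulRpowDeriv f f' (s - 1) y| := by
          rw [← abs_mul]; exact abs_add_le _ _
      _ ≤ (A + |s| * A) * y ^ (m + s - 2) + |s| * ((A + |s - 1| * A) * y ^ (m + s - 2)) := by
          gcongr
      _ = A * (1 + |s| + |s| * (1 + |s - 1|)) * y ^ (m + s - 2) := by ring
      _ ≤ A * ((1 + |s|) * (2 + |s|)) * y ^ (m + s - 2) := by
          gcongr
          nlinarith [abs_nonneg s, mul_le_mul_of_nonneg_left hs₁ (abs_nonneg s)]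

end MulRpow

theorem DerivPowBound.of_eqOn_mul_rpow {g f f' f'' : ℝ → ℝ} {A m s y : ℝ}
    (hg : EqOn g (fun x => f x * x ^ s) (Ioi 0)) (hf : ∀ x > 0, HasDerivAt f (f' x) x)
    (hf' : HasDerivAt f' (f'' y) y) (hy : 0 < y) (h : DerivPowBound A m f f' f'' y) :
    DerivPowBound (A * ((1 + |s|) * (2 + |s|))) (m + s) g (deriv g) (deriv (deriv g)) y := by
  have hd : EqOn (deriv g) (mulRpowDeriv f f' s) (Ioi 0) := fun x (hx : 0 < x) =>
    ((hasDerivAt_mul_rpow (hf x hx) hx).congr_of_eventuallyEq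
      (hg.eventuallyEq_of_mem (Ioi_mem_nhds hx))).deriv
  have hdd := ((hasDerivAt_mulRpowDeriv (hf y hy) hf' hy).congr_of_eventuallyEq
      (hd.eventuallyEq_of_mem (Ioi_mem_nhds hy))).deriv
  unfold DerivPowBound
  rw [hg hy, hd hy, hdd]
  exact h.mul_rpow hy s

noncomputable def profile (τ x : ℝ) : ℝ := (1 - exp (-x)) ^ 2 * exp (-(τ * x)) / 2

noncomputable def profileDeriv (τ x : ℝ) : ℝ :=
  (exp (-x) * (1 - exp (-x)) - τ / 2 * (1 - exp (-x)) ^ 2) * exp (-(τ * x))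

noncomputable def profileDeriv2 (τ x : ℝ) : ℝ :=
  (exp (-x) ^ 2 - exp (-x) * (1 - exp (-x)) - 2 * τ * exp (-x) * (1 - exp (-x))
    + τ ^ 2 / 2 * (1 - exp (-x)) ^ 2) * exp (-(τ * x))

theorem hasDerivAt_exp_neg_mul (c x : ℝ) :
    HasDerivAt (fun x => exp (-(c * x))) (-c * exp (-(c * x))) x := by
  simpa [mul_comm] using ((hasDerivAt_id x).const_mul c).neg.exp

theorem hasDerivAt_profile (τ x : ℝ) : HasDerivAt (profile τ) (profileDeriv τ x) x := by
  have hE := hasDerivAt_exp_neg_mul 1 x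
  simp only [one_mul, neg_mul] at hE
  have hP := hE.const_sub 1
  refine (((hP.fun_pow 2).fun_mul (hasDerivAt_exp_neg_mul τ x)).div_const 2).congr_deriv ?_
  rw [profileDeriv]
  ring

theorem hasDerivAt_profileDeriv (τ x : ℝ) :
    HasDerivAt (profileDeriv τ) (profileDeriv2 τ x) x := by
  have hE := hasDerivAt_exp_neg_mul 1 x
  simp only [one_mul, neg_mul] at hE
  have hP := hE.const_sub 1
  refine (((hE.fun_mul hP).fun_sub ((hP.fun_pow 2).const_mul (τ / 2))).fun_mul
    (hasDerivAt_exp_neg_mul τ x)).congr_deriv ?_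
  rw [profileDeriv2]
  ring

section ProfileBounds

variable {τ y : ℝ}

theorem derivPowBound_profile_two (hτ : 0 ≤ τ) (hy : 0 < y) :
    DerivPowBound ((2 + τ) ^ 2) 2 (profile τ) (profileDeriv τ) (profileDeriv2 τ) y := by
  unfold DerivPowBound profile profileDeriv profileDeriv2
  have hE₀ := exp_pos (-y)
  have hE₁ : exp (-y) ≤ 1 := exp_le_one_iff.2 (by linarith)
  have hPy : 1 - exp (-y) ≤ y := by linarith [add_one_le_exp (-y)]
  have hF₀ := exp_pos (-(τ * y))
  have hF₁ : exp (-(τ * y)) ≤ 1 := exp_le_one_iff.2 (by nlinarith)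
  set E := exp (-y)
  set F := exp (-(τ * y))
  have hP₀ : 0 ≤ 1 - E := by linarith
  have hP₁ : 1 - E ≤ 1 := by linarith
  refine ⟨?_, ?_, ?_⟩
  · rw [abs_of_nonneg (by positivity), rpow_two]
    calc (1 - E) ^ 2 * F / 2 ≤ (1 - E) ^ 2 := by nlinarith [sq_nonneg (1 - E)]
      _ ≤ y ^ 2 := by gcongr
      _ ≤ (2 + τ) ^ 2 * y ^ 2 := le_mul_of_one_le_left (sq_nonneg y) (by nlinarith)
  · rw [show (2:ℝ) - 1 = 1 by norm_num, rpow_one, abs_le]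
    have h₁ : E * (1 - E) * F ≤ 1 * y * 1 := by gcongr
    have h₂ : τ * ((1 - E) * (1 - E) * F) ≤ τ * (1 * y * 1) := by gcongr
    have : 0 ≤ E * (1 - E) * F := by positivity
    have : 0 ≤ τ * ((1 - E) ^ 2 * F) := by positivity
    constructor <;> nlinarith
  · rw [sub_self, rpow_zero, mul_one, abs_le]
    have h₁ : E ^ 2 * F ≤ 1 ^ 2 * 1 := by gcongr
    have h₂ : E * (1 - E) * F ≤ 1 * 1 * 1 := by gcongr
    have h₃ : τ * (E * (1 - E) * F) ≤ τ * (1 * 1 * 1) := by gcongr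
    have h₄ : τ ^ 2 * ((1 - E) ^ 2 * F) ≤ τ ^ 2 * (1 ^ 2 * 1) := by gcongr
    have : 0 ≤ E ^ 2 * F := by positivity
    have : 0 ≤ E * (1 - E) * F := by positivity
    have : 0 ≤ τ * (E * (1 - E) * F) := by positivity
    have : 0 ≤ τ ^ 2 * ((1 - E) ^ 2 * F) := by positivity
    constructor <;> linarith

theorem derivPowBound_profile_zero (hτ : 0 ≤ τ) (hy : 0 < y) :
    DerivPowBound 4 0 (profile τ) (profileDeriv τ) (profileDeriv2 τ) y := by
  unfold DerivPowBound profile profileDeriv profileDeriv2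
  have hE₀ := exp_pos (-y)
  have hE₁ : exp (-y) ≤ 1 := exp_le_one_iff.2 (by linarith)
  have hF₀ := exp_pos (-(τ * y))
  have hF₁ : exp (-(τ * y)) ≤ 1 := exp_le_one_iff.2 (by nlinarith)
  have hyE := pow_mul_exp_neg_le_factorial hy.le 1
  have hy2E := pow_mul_exp_neg_le_factorial hy.le 2
  have hτF := pow_mul_exp_neg_le_factorial (mul_nonneg hτ hy.le) 1
  have hτ2F := pow_mul_exp_neg_le_factorial (mul_nonneg hτ hy.le) 2
  norm_num [Nat.factorial] at hyE hy2E hτF hτ2F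
  set E := exp (-y)
  set F := exp (-(τ * y))
  have hP₀ : 0 ≤ 1 - E := by linarith
  have hP₁ : 1 - E ≤ 1 := by linarith
  refine ⟨?_, ?_, ?_⟩
  · rw [abs_of_nonneg (by positivity), rpow_zero]
    nlinarith [sq_nonneg (1 - E)]
  · rw [zero_sub, rpow_neg_one, ← div_eq_mul_inv, le_div_iff₀ hy, ← abs_of_pos hy, ← abs_mul,
      abs_le]
    have h₁ : y * E * (1 - E) * F ≤ 1 * 1 * 1 := by gcongr
    have h₂ : τ * y * F * (1 - E) ^ 2 ≤ 1 * 1 ^ 2 := by gcongr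
    have : 0 ≤ y * E * (1 - E) * F := by positivity
    have : 0 ≤ τ * y * F * (1 - E) ^ 2 := by positivity
    constructor <;> linarith
  · have hy2 : 0 < y ^ 2 := by positivity
    rw [zero_sub, rpow_neg hy.le, rpow_two, ← div_eq_mul_inv, le_div_iff₀ hy2,
      ← abs_of_pos hy2, ← abs_mul, abs_le]
    have h₁ : y ^ 2 * E * E * F ≤ 2 * 1 * 1 := by gcongr
    have h₂ : y ^ 2 * E * (1 - E) * F ≤ 2 * 1 * 1 := by gcongr
    have h₃ : y * E * (τ * y * F) * (1 - E) ≤ 1 * 1 * 1 := by gcongr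
    have h₄ : (τ * y) ^ 2 * F * (1 - E) ^ 2 ≤ 2 * 1 ^ 2 := by gcongr
    have : 0 ≤ y ^ 2 * E * E * F := by positivity
    have : 0 ≤ y ^ 2 * E * (1 - E) * F := by positivity
    have : 0 ≤ y * E * (τ * y * F) * (1 - E) := by positivity
    have : 0 ≤ (τ * y) ^ 2 * F * (1 - E) ^ 2 := by positivity
    constructor <;> linarith

end ProfileBounds

noncomputable def gAlphaTau (α τ x : ℝ) : ℝ :=
  (1 - exp (-x)) ^ 2 * exp (-(τ * x)) / (2 * x ^ (1 + α))

theorem eqOn_gAlphaTau (α τ : ℝ) :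
    EqOn (gAlphaTau α τ) (fun x => profile τ x * x ^ (-(1 + α))) (Ioi 0) := by
  intro x (hx : 0 < x)
  simp only [gAlphaTau, profile, rpow_neg hx.le]
  field_simp

theorem contDiffOn_gAlphaTau (α τ : ℝ) : ContDiffOn ℝ 2 (gAlphaTau α τ) (Ioi 0) := by
  have hden : ContDiffOn ℝ 2 (fun x : ℝ => 2 * x ^ (1 + α)) (Ioi 0) := fun x (hx : 0 < x) =>
    (contDiffAt_const.mul (contDiffAt_rpow_const_of_ne hx.ne')).contDiffWithinAt
  exact (by fun_prop : ContDiff ℝ 2 fun x => (1 - exp (-x)) ^ 2 * exp (-(τ * x))).contDiffOn.div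
    hden fun x (hx : 0 < x) => by positivity

theorem measurable_gAlphaTau (α τ : ℝ) : Measurable (gAlphaTau α τ) := by
  unfold gAlphaTau
  fun_prop

/-- membership of `g_{α,τ}(x) = (1−e^{−x})² e^{−τx}/(2x^{1+α})`,
`α = d/2 − 1 + α'`, in the class `𝒬_β` with `β = (2α, 2(1+α), 2(1+α))`: `g_{α,τ}` is `C²`
on `(0,∞)`, the weighted integrability conditions hold, and the stated `limsup`s at `0⁺`
are finite (expressed as eventual boundedness along `𝓝[>] 0`). -/
theorem stmt13 (d : ℕ) (hd : 2 ≤ d) (α' α τ : ℝ) (h0 : 0 < α') (h1 : α' < 1)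
    (hα : α = (d : ℝ) / 2 - 1 + α') (hτ : 0 ≤ τ) (g : ℝ → ℝ)
    (hg : g = fun x : ℝ =>
      (1 - Real.exp (-x)) ^ 2 * Real.exp (-(τ * x)) / (2 * x ^ (1 + α))) :
    ContDiffOn ℝ 2 g (Set.Ioi 0) ∧
      IntegrableOn (fun x : ℝ => x ^ (d - 1) * |g (x ^ 2)|) (Set.Ioi 0) ∧
      IntegrableOn (fun x : ℝ => x ^ d * |deriv g (x ^ 2)|) (Set.Ioi 1) ∧
      IntegrableOn (fun x : ℝ => x ^ (d + 1) * |deriv (deriv g) (x ^ 2)|) (Set.Ioi 1) ∧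
      Filter.IsBoundedUnder (· ≤ ·) (nhdsWithin 0 (Set.Ioi 0))
        (fun x : ℝ => x ^ (2 * α) * |g (x ^ 2)|) ∧
      Filter.IsBoundedUnder (· ≤ ·) (nhdsWithin 0 (Set.Ioi 0))
        (fun x : ℝ => x ^ (2 * (1 + α)) * |deriv g (x ^ 2)|) ∧
      Filter.IsBoundedUnder (· ≤ ·) (nhdsWithin 0 (Set.Ioi 0))
        (fun x : ℝ => x ^ (2 * (1 + α)) * |deriv (deriv g) (x ^ 2)|) := by
  obtain rfl : g = gAlphaTau α τ := hg
  have hd₁ : ((d - 1 : ℕ) : ℝ) = d - 1 := by rw [Nat.cast_sub (by omega), Nat.cast_one]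
  have near := fun y (hy : 0 < y) => (derivPowBound_profile_two hτ hy).of_eqOn_mul_rpow
    (eqOn_gAlphaTau α τ) (fun x _ => hasDerivAt_profile τ x) (hasDerivAt_profileDeriv τ y) hy
  have far := fun y (hy : 0 < y) => (derivPowBound_profile_zero hτ hy).of_eqOn_mul_rpow
    (eqOn_gAlphaTau α τ) (fun x _ => hasDerivAt_profile τ x) (hasDerivAt_profileDeriv τ y) hy
  refine ⟨contDiffOn_gAlphaTau α τ, ?_, ?_, ?_, ?_, ?_, ?_⟩
  · rw [← Ioc_union_Ioi_eq_Ioi zero_le_one]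
    refine (integrableOn_Ioc_zero_one_pow_mul_abs_comp_sq (measurable_gAlphaTau α τ)
      (fun y hy => (near y hy.1).1) ?_).union (integrableOn_Ioi_one_pow_mul_abs_comp_sq
      (measurable_gAlphaTau α τ) (fun y hy => (far y (one_pos.trans hy)).1) ?_) <;>
    linarith
  · exact integrableOn_Ioi_one_pow_mul_abs_comp_sq (measurable_deriv _)
      (fun y hy => (far y (one_pos.trans hy)).2.1) (by linarith)
  · exact integrableOn_Ioi_one_pow_mul_abs_comp_sq (measurable_deriv _)
      (fun y hy => (far y (one_pos.trans hy)).2.2) (by push_cast; linarith)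
  · exact isBoundedUnder_rpow_mul_abs_comp_sq_s13 (fun y hy => (near y hy.1).1) (by linarith)
  · exact isBoundedUnder_rpow_mul_abs_comp_sq_s13 (fun y hy => (near y hy.1).2.1) (by linarith)
  · exact isBoundedUnder_rpow_mul_abs_comp_sq_s13 (fun y hy => (near y hy.1).2.2) (by linarith)
end
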